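/- arXiv:2502.07460 — 2 statements merged into one kernel-verified Lean document; each statement's English description precedes it below -/
import Mathlib

section
/- Let A be a finite set, π_ref a positive probability distribution on A, η > 0, R* : A → ℝ, and R : A → ℝ with R(a) ≥ R*(a) for all a. Define δ(a) = R(a) - R*(a) ≥ 0 and for λ ∈ [0,1] let π_λ(a) ∝ π_ref(a)·exp(η·(λ·δ(a) + R*(a))) and U(λ) = λ·Σ_a δ(a)^2·π_λ(a). Then U is nondecreasing on [0,1]; in particular U(λ) ≤ U(1) for all λ ∈ [0,1]. -/
open Finset

/-- Gibbs distribution induced by reward `R`. -/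
noncomputable def gibbs {A : Type*} [Fintype A] (η : ℝ) (πref R : A → ℝ) (a : A) : ℝ :=
  πref a * Real.exp (η * R a) / ∑ a', πref a' * Real.exp (η * R a')

theorem U_monotone {A : Type*} [Fintype A]
    (πref : A → ℝ) (hpos : ∀ a, 0 < πref a) (hsum : ∑ a, πref a = 1)
    (η : ℝ) (hη : 0 < η) (Rstar R : A → ℝ) (hRR : ∀ a, Rstar a ≤ R a) :
    MonotoneOn
      (fun lam : ℝ => lam * ∑ a, (R a - Rstar a) ^ 2 *
        gibbs η πref (fun a => lam * (R a - Rstar a) + Rstar a) a)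
      (Set.Icc (0 : ℝ) 1) ∧
    ∀ lam ∈ Set.Icc (0 : ℝ) 1,
      lam * ∑ a, (R a - Rstar a) ^ 2 *
          gibbs η πref (fun a => lam * (R a - Rstar a) + Rstar a) a
        ≤ 1 * ∑ a, (R a - Rstar a) ^ 2 *
          gibbs η πref (fun a => 1 * (R a - Rstar a) + Rstar a) a := by
  classical
  have hne : (Finset.univ : Finset A).Nonempty := by
    rcases (Finset.univ : Finset A).eq_empty_or_nonempty with h | h
    · rw [h] at hsum; simp at hsum
    · exact h
  set δ : A → ℝ := fun a => R a - Rstar a with hδ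
  have hδ0 : ∀ a, 0 ≤ δ a := fun a => sub_nonneg.2 (hRR a)
  set g : ℝ → A → ℝ := fun lam a => πref a * Real.exp (η * (lam * δ a + Rstar a)) with hg
  have hgpos : ∀ lam a, 0 < g lam a := fun lam a => mul_pos (hpos a) (Real.exp_pos _)
  set S : ℝ → ℝ := fun lam => ∑ a, g lam a with hS
  have hSpos : ∀ lam, 0 < S lam := fun lam =>
    Finset.sum_pos (fun a _ => hgpos lam a) hne
  set N : ℝ → ℝ := fun lam => ∑ a, δ a ^ 2 * g lam a with hN
  have hNnn : ∀ lam, 0 ≤ N lam := fun lam =>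
    Finset.sum_nonneg fun a _ => mul_nonneg (sq_nonneg _) (hgpos lam a).le
  -- rewrite U in terms of N/S
  have hU : ∀ lam : ℝ,
      (∑ a, (R a - Rstar a) ^ 2 *
        gibbs η πref (fun a => lam * (R a - Rstar a) + Rstar a) a) = N lam / S lam := by
    intro lam
    rw [hN, Finset.sum_div]
    refine Finset.sum_congr rfl fun a _ => ?_
    rw [mul_div_assoc]
    rfl
  -- key cross inequality
  have key : ∀ lam mu : ℝ, lam ≤ mu → N lam * S mu ≤ N mu * S lam := by
    intro lam mu hlm
    have expand : ∀ l m : ℝ, N l * S m = ∑ a, ∑ b, δ a ^ 2 * g l a * g m b := by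
      intro l m
      rw [hN, hS, Finset.sum_mul]
      exact Finset.sum_congr rfl fun a _ => by rw [Finset.mul_sum]
    rw [expand, expand, ← sub_nonneg, ← Finset.sum_sub_distrib]
    have hptsum : ∀ a b : A,
        0 ≤ (δ a ^ 2 - δ b ^ 2) * (g mu a * g lam b - g lam a * g mu b) := by
      intro a b
      have hgprod : ∀ l m : ℝ, g l a * g m b =
          πref a * πref b * Real.exp (η * (l * δ a + Rstar a) + η * (m * δ b + Rstar b)) := by
        intro l m
        rw [hg]; simp only [Real.exp_add]; ring
      have hπ : 0 ≤ πref a * πref b := (mul_pos (hpos a) (hpos b)).le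
      rcases le_total (δ a) (δ b) with h | h
      · have h1 : δ a ^ 2 - δ b ^ 2 ≤ 0 := sub_nonpos.2 (pow_le_pow_left₀ (hδ0 a) h 2)
        have h2 : g mu a * g lam b - g lam a * g mu b ≤ 0 := by
          apply sub_nonpos.2
          rw [hgprod, hgprod]
          apply mul_le_mul_of_nonneg_left _ hπ
          apply Real.exp_le_exp.2
          nlinarith [mul_nonneg (mul_nonneg hη.le (sub_nonneg.2 hlm)) (sub_nonneg.2 h)]
        nlinarith [mul_nonneg (neg_nonneg.2 h1) (neg_nonneg.2 h2)]
      · apply mul_nonneg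
        · exact sub_nonneg.2 (pow_le_pow_left₀ (hδ0 b) h 2)
        · apply sub_nonneg.2
          rw [hgprod, hgprod]
          apply mul_le_mul_of_nonneg_left _ hπ
          apply Real.exp_le_exp.2
          nlinarith [mul_nonneg (mul_nonneg hη.le (sub_nonneg.2 hlm)) (sub_nonneg.2 h)]
    have hmain : 0 ≤ ∑ a, ∑ b, (δ a ^ 2 * g mu a * g lam b - δ a ^ 2 * g lam a * g mu b) := by
      have hc : (∑ a, ∑ b, (δ a ^ 2 * g mu a * g lam b - δ a ^ 2 * g lam a * g mu b))
          = ∑ a, ∑ b, (δ b ^ 2 * g mu b * g lam a - δ b ^ 2 * g lam b * g mu a) :=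
        Finset.sum_comm ..
      have htwo : (2 : ℝ) * (∑ a, ∑ b, (δ a ^ 2 * g mu a * g lam b - δ a ^ 2 * g lam a * g mu b))
          = ∑ a, ∑ b, (δ a ^ 2 - δ b ^ 2) * (g mu a * g lam b - g lam a * g mu b) := by
        rw [two_mul]
        nth_rewrite 2 [hc]
        rw [← Finset.sum_add_distrib]
        refine Finset.sum_congr rfl fun a _ => ?_
        rw [← Finset.sum_add_distrib]
        exact Finset.sum_congr rfl fun b _ => by ring
      have h2 : 0 ≤ (2 : ℝ) * (∑ a, ∑ b, (δ a ^ 2 * g mu a * g lam b - δ a ^ 2 * g lam a * g mu b)) := by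
        rw [htwo]
        exact Finset.sum_nonneg fun a _ => Finset.sum_nonneg fun b _ => hptsum a b
      linarith
    simpa [Finset.sum_sub_distrib] using hmain
  -- ratio monotone
  have hq : ∀ lam mu : ℝ, lam ≤ mu → N lam / S lam ≤ N mu / S mu := by
    intro lam mu hlm
    rw [div_le_div_iff₀ (hSpos lam) (hSpos mu)]
    exact key lam mu hlm
  have hmono : MonotoneOn
      (fun lam : ℝ => lam * ∑ a, (R a - Rstar a) ^ 2 *
        gibbs η πref (fun a => lam * (R a - Rstar a) + Rstar a) a)
      (Set.Icc (0 : ℝ) 1) := by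
    intro lam hlam mu hmu hlm
    simp only [hU]
    exact mul_le_mul hlm (hq lam mu hlm)
      (div_nonneg (hNnn lam) (hSpos lam).le) (le_trans hlam.1 hlm)
  exact ⟨hmono, fun lam hlam => hmono hlam ⟨zero_le_one, le_rfl⟩ hlam.2⟩
end

section
/- Let A be a finite set, π_ref a positive probability distribution on A, η > 0, and R_1, R_2 : A → ℝ with R_2(a) ≥ R_1(a) for all a ∈ A. Then the suboptimality gap of the Gibbs policy π_2 (induced by R_2) under the true reward R_1 satisfies: [(1/η)·log Z_{R_1} ] - [ E_{a∼π_2}[R_1(a)] - (1/η)·KL(π_2 ∥ π_ref) ] ≤ η·E_{a∼π_2}[(R_2(a) - R_1(a))^2], where Z_{R_1} = Σ_a π_ref(a)·exp(η·R_1(a)) and π_2(a) = π_ref(a)·exp(η·R_2(a))/Z_{R_2}. -/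
open Finset

/-- KL divergence between two distributions on a finite set. -/
noncomputable def KLdiv {A : Type*} [Fintype A] (π πref : A → ℝ) : ℝ :=
  ∑ a, π a * Real.log (π a / πref a)

lemma exp_neg_le_quad {x : ℝ} (hx : 0 ≤ x) : Real.exp (-x) ≤ 1 - x + x ^ 2 := by
  have h1 : Real.exp (-x) ≤ 1 / (1 + x) := by
    rw [Real.exp_neg, one_div]
    exact inv_anti₀ (by linarith) (by nlinarith [Real.add_one_le_exp x])
  have h2 : 1 / (1 + x) ≤ 1 - x + x ^ 2 := by
    rw [div_le_iff₀ (by linarith)]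
    nlinarith
  linarith

theorem single_step_regret_bound {A : Type*} [Fintype A]
    (πref : A → ℝ) (hpos : ∀ a, 0 < πref a) (hsum : ∑ a, πref a = 1)
    (η : ℝ) (hη : 0 < η) (R₁ R₂ : A → ℝ) (hopt : ∀ a, R₁ a ≤ R₂ a) :
    (1 / η) * Real.log (∑ a, πref a * Real.exp (η * R₁ a))
      - ((∑ a, gibbs η πref R₂ a * R₁ a) - (1 / η) * KLdiv (gibbs η πref R₂) πref)
    ≤ η * ∑ a, gibbs η πref R₂ a * (R₂ a - R₁ a) ^ 2 := by
  have hne : (Finset.univ : Finset A).Nonempty := by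
    rcases (Finset.univ : Finset A).eq_empty_or_nonempty with h | h
    · rw [h, Finset.sum_empty] at hsum; norm_num at hsum
    · exact h
  set Z₁ := ∑ a, πref a * Real.exp (η * R₁ a) with hZ1def
  set Z₂ := ∑ a', πref a' * Real.exp (η * R₂ a') with hZ2def
  have hZ1 : 0 < Z₁ := Finset.sum_pos (fun a _ => mul_pos (hpos a) (Real.exp_pos _)) hne
  have hZ2 : 0 < Z₂ := Finset.sum_pos (fun a _ => mul_pos (hpos a) (Real.exp_pos _)) hne
  set π₂ := gibbs η πref R₂ with hπ₂def
  have hπ₂ : ∀ a, π₂ a = πref a * Real.exp (η * R₂ a) / Z₂ := by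
    intro a
    simp only [hπ₂def, gibbs, ← hZ2def]
  have hπ₂pos : ∀ a, 0 < π₂ a := fun a =>
    div_pos (mul_pos (hpos a) (Real.exp_pos _)) hZ2
  have hπ₂sum : ∑ a, π₂ a = 1 := by
    simp_rw [hπ₂]
    rw [← Finset.sum_div, ← hZ2def, div_self hZ2.ne']
  set D := ∑ a, π₂ a * (R₂ a - R₁ a) with hDdef
  set Q := ∑ a, π₂ a * (R₂ a - R₁ a) ^ 2 with hQdef
  -- KL in closed form
  have hKL : KLdiv π₂ πref = η * (∑ a, π₂ a * R₂ a) - Real.log Z₂ := by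
    unfold KLdiv
    have key : ∀ a ∈ Finset.univ, π₂ a * Real.log (π₂ a / πref a)
        = π₂ a * (η * R₂ a) - π₂ a * Real.log Z₂ := by
      intro a _
      have hratio : π₂ a / (πref a) = Real.exp (η * R₂ a) / Z₂ := by
        rw [hπ₂, div_div, mul_comm Z₂ (πref a), ← div_div,
          mul_div_cancel_left₀ _ (hpos a).ne']
      rw [hratio, Real.log_div (Real.exp_pos _).ne' hZ2.ne', Real.log_exp]
      ring
    rw [Finset.sum_congr rfl key, Finset.sum_sub_distrib, ← Finset.sum_mul, hπ₂sum, one_mul]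
    congr 1
    rw [Finset.mul_sum]
    exact Finset.sum_congr rfl fun a _ => by ring
  -- Z₁ / Z₂ as expectation
  have hS : Z₁ / Z₂ = ∑ a, π₂ a * Real.exp (-(η * (R₂ a - R₁ a))) := by
    rw [hZ1def, Finset.sum_div]
    refine Finset.sum_congr rfl fun a _ => ?_
    rw [hπ₂, div_mul_eq_mul_div, mul_assoc, ← Real.exp_add,
      show η * R₂ a + -(η * (R₂ a - R₁ a)) = η * R₁ a by ring]
  -- bound the expectation
  have hSle : Z₁ / Z₂ ≤ 1 - η * D + η ^ 2 * Q := by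
    rw [hS]
    have step : ∑ a, π₂ a * Real.exp (-(η * (R₂ a - R₁ a)))
        ≤ ∑ a, π₂ a * (1 - η * (R₂ a - R₁ a) + (η * (R₂ a - R₁ a)) ^ 2) := by
      refine Finset.sum_le_sum fun a _ => ?_
      refine mul_le_mul_of_nonneg_left ?_ (hπ₂pos a).le
      exact exp_neg_le_quad (mul_nonneg hη.le (by linarith [hopt a]))
    refine step.trans_eq ?_
    have expand : ∀ a ∈ Finset.univ, π₂ a * (1 - η * (R₂ a - R₁ a) + (η * (R₂ a - R₁ a)) ^ 2)
        = π₂ a - η * (π₂ a * (R₂ a - R₁ a)) + η ^ 2 * (π₂ a * (R₂ a - R₁ a) ^ 2) := by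
      intro a _; ring
    rw [Finset.sum_congr rfl expand, Finset.sum_add_distrib, Finset.sum_sub_distrib,
      hπ₂sum, ← Finset.mul_sum, ← Finset.mul_sum, ← hDdef, ← hQdef]
  have hlog : Real.log Z₁ - Real.log Z₂ ≤ -(η * D) + η ^ 2 * Q := by
    rw [← Real.log_div hZ1.ne' hZ2.ne']
    have := Real.log_le_sub_one_of_pos (div_pos hZ1 hZ2)
    linarith
  -- difference of expectations
  have hdiff : (∑ a, π₂ a * R₂ a) - (∑ a, π₂ a * R₁ a) = D := by
    rw [hDdef, ← Finset.sum_sub_distrib]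
    exact Finset.sum_congr rfl fun a _ => by ring
  rw [hKL]
  have hQnonneg : 0 ≤ Q :=
    Finset.sum_nonneg fun a _ => mul_nonneg (hπ₂pos a).le (sq_nonneg _)
  have hη' : (0:ℝ) < 1 / η := by positivity
  have := mul_le_mul_of_nonneg_left hlog hη'.le
  have key : (1 / η) * (η * (∑ a, π₂ a * R₂ a) - Real.log Z₂)
      = (∑ a, π₂ a * R₂ a) - (1 / η) * Real.log Z₂ := by
    field_simp
  have h3 : (1 / η) * (-(η * D) + η ^ 2 * Q) = -D + η * Q := by
    field_simp
  have hexp : (1 / η) * (Real.log Z₁ - Real.log Z₂)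
      = (1 / η) * Real.log Z₁ - (1 / η) * Real.log Z₂ := by ring
  linarith [this, hdiff, key, h3, hexp]
end
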